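/- Let n ≥ 1 and λ_1, …, λ_n > 0. Let W, B, T = (T_1,…,T_n) and D = (D_1,…,D_n) be random variables on a common probability space such that: (i) W ≥ 0 and B ≥ 0 almost surely; (ii) W + B = ∑_{p=1}^n T_p almost surely; (iii) W and B are independent; (iv) the joint law of (T, D) is ν ⊗ κ, where ν is the law of T on [0,∞)^n and, for each t, κ(t) is the product over p = 1,…,n of Poisson distributions on ℕ with means λ_p t_p. Let β(ω) = E[e^{−ωB}]. Then for every ω with 0 ≤ ω ≤ min_p λ_p: E[ e^{−ωW} ] = (1/β(ω)) · E[ ∏_{p=1}^n (1 − ω/λ_p)^{D_p} ]. (Here 0^0 is taken to be 1; note β(ω) > 0 since B is almost surely finite.) -/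

import Mathlib

/-! Given the spans `T`, the counts `D_p` are independent Poisson variables with means
`λ_p T_p`, so their joint generating function at `c_p = 1 - ω / λ_p` is
`E[∏ p, e^{(c_p - 1) λ_p T_p}] = E[e^{-ω ∑ p, T_p}] = E[e^{-ω (W + B)}]`. By independence
this is `E[e^{-ωW}] β(ω)`, and `β(ω) > 0`. -/

open MeasureTheory ProbabilityTheory

/-- The Poisson probability mass function with (real) mean `r`: `e^{-r} r^k / k!`. -/
noncomputable def poissonPdf (r : ℝ) (k : ℕ) : ℝ :=
  Real.exp (-r) * r ^ k / (Nat.factorial k)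

open scoped ENNReal

theorem ENNReal.tsum_pi_prod {ι α : Type*} [Fintype ι] (g : ι → α → ℝ≥0∞) :
    ∑' f : ι → α, ∏ i, g i (f i) = ∏ i, ∑' a, g i a := by
  revert g
  refine Fintype.induction_empty_option
    (P := fun ι _ => ∀ g : ι → α → ℝ≥0∞, ∑' f : ι → α, ∏ i, g i (f i) = ∏ i, ∑' a, g i a)
    ?_ ?_ ?_ ι
  · intro ι κ _ e ih g
    let _ : Fintype ι := Fintype.ofEquiv κ e.symm
    rw [← (e.arrowCongr (Equiv.refl α)).tsum_eq]
    convert ih (fun i => g (e i)) using 1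
    · exact tsum_congr fun f => Fintype.prod_equiv e.symm _ _ fun k => by simp
    · exact Fintype.prod_equiv e.symm _ _ fun k => by simp
  · intro g
    simp
  · intro ι _ ih g
    rw [← Equiv.piOptionEquivProd.symm.tsum_eq, ENNReal.tsum_prod']
    simp [Fintype.prod_option, ENNReal.tsum_mul_left, ENNReal.tsum_mul_right, ih]

theorem poissonPdf_nonneg {r : ℝ} (hr : 0 ≤ r) (k : ℕ) : 0 ≤ poissonPdf r k := by
  unfold poissonPdf; positivity

@[fun_prop]
theorem continuous_poissonPdf (k : ℕ) : Continuous fun r => poissonPdf r k := by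
  unfold poissonPdf; fun_prop

theorem hasSum_pow_mul_poissonPdf (c r : ℝ) :
    HasSum (fun k => c ^ k * poissonPdf r k) (Real.exp ((c - 1) * r)) := by
  have hterm : (fun k => c ^ k * poissonPdf r k)
      = fun k => Real.exp (-r) * ((c * r) ^ k / k.factorial) := by
    ext k; simp only [poissonPdf, mul_pow]; ring
  rw [hterm, show (c - 1) * r = -r + c * r by ring, Real.exp_add, Real.exp_eq_exp_ℝ]
  exact (NormedSpace.expSeries_div_hasSum_exp (c * r)).mul_left _

theorem tsum_ofReal_prod_pow_mul_poissonPdf {ι : Type*} [Fintype ι] {c r : ι → ℝ}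
    (hc : ∀ i, 0 ≤ c i) (hr : ∀ i, 0 ≤ r i) :
    ∑' f : ι → ℕ, ENNReal.ofReal (∏ i, c i ^ f i * poissonPdf (r i) (f i))
      = ENNReal.ofReal (Real.exp (∑ i, (c i - 1) * r i)) := by
  have hterm : ∀ i k, 0 ≤ c i ^ k * poissonPdf (r i) k := fun i k =>
    mul_nonneg (pow_nonneg (hc i) k) (poissonPdf_nonneg (hr i) k)
  calc ∑' f : ι → ℕ, ENNReal.ofReal (∏ i, c i ^ f i * poissonPdf (r i) (f i))
      = ∑' f : ι → ℕ, ∏ i, ENNReal.ofReal (c i ^ f i * poissonPdf (r i) (f i)) :=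
        tsum_congr fun f => ENNReal.ofReal_prod_of_nonneg fun i _ => hterm i (f i)
    _ = ∏ i, ∑' k, ENNReal.ofReal (c i ^ k * poissonPdf (r i) k) :=
        ENNReal.tsum_pi_prod fun i k => ENNReal.ofReal (c i ^ k * poissonPdf (r i) k)
    _ = ∏ i, ENNReal.ofReal (Real.exp ((c i - 1) * r i)) := by
        refine Finset.prod_congr rfl fun i _ => ?_
        rw [← ENNReal.ofReal_tsum_of_nonneg (hterm i) (hasSum_pow_mul_poissonPdf _ _).summable,
          (hasSum_pow_mul_poissonPdf _ _).tsum_eq]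
    _ = ENNReal.ofReal (Real.exp (∑ i, (c i - 1) * r i)) := by
        rw [← ENNReal.ofReal_prod_of_nonneg fun i _ => (Real.exp_pos _).le, Real.exp_sum]

theorem integral_prod_pow_eq_integral_exp_of_mixedPoisson {Ω ι : Type*} [MeasurableSpace Ω]
    [Fintype ι]
    {μ : Measure Ω} {ν : Measure (ι → ℝ)} {lam c : ι → ℝ} (hlam : ∀ i, 0 ≤ lam i)
    (hc : ∀ i, 0 ≤ c i) (hν : ∀ᵐ t ∂ν, ∀ i, 0 ≤ t i) {D : Ω → ι → ℕ} (hD : Measurable D)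
    (hlaw : ∀ f, μ {x | D x = f} = ∫⁻ t, ENNReal.ofReal (∏ i, poissonPdf (lam i * t i) (f i)) ∂ν) :
    ∫ x, ∏ i, c i ^ D x i ∂μ = ∫ t, Real.exp (∑ i, (c i - 1) * (lam i * t i)) ∂ν := by
  have hmeas (f : ι → ℕ) : Measurable fun t : ι → ℝ =>
      ENNReal.ofReal (∏ i, c i ^ f i * poissonPdf (lam i * t i) (f i)) := by
    fun_prop
  have hlintegral : ∫⁻ x, ENNReal.ofReal (∏ i, c i ^ D x i) ∂μ
      = ∫⁻ t, ENNReal.ofReal (Real.exp (∑ i, (c i - 1) * (lam i * t i))) ∂ν := by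
    calc ∫⁻ x, ENNReal.ofReal (∏ i, c i ^ D x i) ∂μ
        = ∑' f : ι → ℕ, ENNReal.ofReal (∏ i, c i ^ f i) * μ {x | D x = f} := by
          rw [← lintegral_map (f := fun d : ι → ℕ => ENNReal.ofReal (∏ i, c i ^ d i))
            (measurable_of_countable _) hD, lintegral_countable']
          simp_rw [Measure.map_apply hD (measurableSet_singleton _)]
          rfl
      _ = ∑' f : ι → ℕ,
            ∫⁻ t, ENNReal.ofReal (∏ i, c i ^ f i * poissonPdf (lam i * t i) (f i)) ∂ν := by
          refine tsum_congr fun f => ?_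
          rw [hlaw, ← lintegral_const_mul' _ _ ENNReal.ofReal_ne_top]
          simp_rw [← ENNReal.ofReal_mul (Finset.prod_nonneg fun i _ => pow_nonneg (hc i) _),
            Finset.prod_mul_distrib]
      _ = ∫⁻ t, ∑' f : ι → ℕ,
            ENNReal.ofReal (∏ i, c i ^ f i * poissonPdf (lam i * t i) (f i)) ∂ν :=
          (lintegral_tsum fun f => (hmeas f).aemeasurable).symm
      _ = _ := lintegral_congr_ae <| hν.mono fun t ht =>
          tsum_ofReal_prod_pow_mul_poissonPdf hc fun i => mul_nonneg (hlam i) (ht i)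
  rw [integral_eq_lintegral_of_nonneg_ae, integral_eq_lintegral_of_nonneg_ae, hlintegral]
  · exact ae_of_all _ fun t => (Real.exp_pos _).le
  · exact (Continuous.measurable (by fun_prop)).aestronglyMeasurable
  · exact ae_of_all _ fun x => Finset.prod_nonneg fun i _ => pow_nonneg (hc i) _
  · exact ((measurable_of_countable fun d : ι → ℕ => ∏ i, c i ^ d i).comp hD).aestronglyMeasurable

theorem stmt5_general {Ω : Type*} [MeasurableSpace Ω] (μ : Measure Ω) [IsProbabilityMeasure μ]
    (n : ℕ) (lam : Fin n → ℝ) (hlam : ∀ p, 0 < lam p)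
    (ν : Measure (Fin n → ℝ))
    (hνsupp : ∀ᵐ t ∂ν, ∀ p, 0 ≤ t p)
    (T : Ω → Fin n → ℝ) (D : Ω → Fin n → ℕ) (hT : Measurable T) (hD : Measurable D)
    (hTlaw : Measure.map T μ = ν)
    (hjoint : ∀ A : Set (Fin n → ℝ), MeasurableSet A → ∀ f : Fin n → ℕ,
      μ (T ⁻¹' A ∩ {x | D x = f})
        = ∫⁻ t in A, ENNReal.ofReal (∏ p, poissonPdf (lam p * t p) (f p)) ∂ν)
    (W B : Ω → ℝ) (hW : Measurable W) (hB : Measurable B)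
    (hB0 : ∀ᵐ x ∂μ, 0 ≤ B x)
    (hWB : ∀ᵐ x ∂μ, W x + B x = ∑ p, T x p)
    (hWBindep : IndepFun W B μ)
    (β : ℝ → ℝ) (hβ : ∀ ω : ℝ, β ω = ∫ x, Real.exp (-ω * B x) ∂μ)
    (ω : ℝ) (hω0 : 0 ≤ ω) (hωlam : ∀ p, ω ≤ lam p) :
    ∫ x, Real.exp (-ω * W x) ∂μ
      = (1 / β ω) * ∫ x, ∏ p, (1 - ω / lam p) ^ (D x p) ∂μ := by
  have hpgf : ∫ x, ∏ p, (1 - ω / lam p) ^ D x p ∂μ = mgf (W + B) μ (-ω) := calc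
    _ = ∫ t, Real.exp (-ω * ∑ p, t p) ∂ν := by
      rw [integral_prod_pow_eq_integral_exp_of_mixedPoisson (fun p => (hlam p).le)
        (fun p => sub_nonneg.2 ((div_le_one (hlam p)).2 (hωlam p))) hνsupp hD
        fun f => by simpa using hjoint Set.univ MeasurableSet.univ f]
      have hcoef : ∀ p, (1 - ω / lam p - 1) * lam p = -ω := fun p => by
        field_simp [(hlam p).ne']
        ring
      simp_rw [← mul_assoc, hcoef, Finset.mul_sum]
    _ = ∫ x, Real.exp (-ω * ∑ p, T x p) ∂μ := by
      rw [← hTlaw, integral_map hT.aemeasurable (Continuous.aestronglyMeasurable (by fun_prop))]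
    _ = mgf (W + B) μ (-ω) := integral_congr_ae <| hWB.mono fun x hx => by simp [hx]
  have hβ_mgf : β ω = mgf B μ (-ω) := hβ ω
  have hβ_pos : 0 < β ω := by
    rw [hβ_mgf]
    refine mgf_pos (Integrable.of_mem_Icc 0 1 (by fun_prop) (hB0.mono fun x hx => ?_))
    exact ⟨(Real.exp_pos _).le, Real.exp_le_one_iff.2 (by nlinarith)⟩
  rw [hpgf, hWBindep.mgf_add' hW.aestronglyMeasurable hB.aestronglyMeasurable, ← hβ_mgf, mgf]
  field_simp

/-- The generalised distributional form of Little's law (Theorem 4.1 of the paper), in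
abstract form: if `W, B ≥ 0` a.s. are independent with `W + B = ∑ p, T_p` a.s., and the
pair `(T, D)` has law `ν ⊗ κ` with `κ` the product-Poisson kernel with means `λ_p t_p`,
then with `β(ω) = E[e^{-ωB}]`, for every `ω` with `0 ≤ ω ≤ min_p λ_p`,
`E[e^{-ωW}] = (1/β(ω)) E[∏ p, (1 - ω/λ_p) ^ D_p]`. -/
theorem stmt5 {Ω : Type*} [MeasurableSpace Ω] (μ : Measure Ω) [IsProbabilityMeasure μ]
    (n : ℕ) (hn : 0 < n) (lam : Fin n → ℝ) (hlam : ∀ p, 0 < lam p)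
    (ν : Measure (Fin n → ℝ)) [IsProbabilityMeasure ν]
    (hνsupp : ∀ᵐ t ∂ν, ∀ p, 0 ≤ t p)
    (T : Ω → Fin n → ℝ) (D : Ω → Fin n → ℕ) (hT : Measurable T) (hD : Measurable D)
    (hTlaw : Measure.map T μ = ν)
    (hjoint : ∀ A : Set (Fin n → ℝ), MeasurableSet A → ∀ f : Fin n → ℕ,
      μ (T ⁻¹' A ∩ {x | D x = f})
        = ∫⁻ t in A, ENNReal.ofReal (∏ p, poissonPdf (lam p * t p) (f p)) ∂ν)
    (W B : Ω → ℝ) (hW : Measurable W) (hB : Measurable B)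
    (hW0 : ∀ᵐ x ∂μ, 0 ≤ W x) (hB0 : ∀ᵐ x ∂μ, 0 ≤ B x)
    (hWB : ∀ᵐ x ∂μ, W x + B x = ∑ p, T x p)
    (hWBindep : IndepFun W B μ)
    (β : ℝ → ℝ) (hβ : ∀ ω : ℝ, β ω = ∫ x, Real.exp (-ω * B x) ∂μ)
    (ω : ℝ) (hω0 : 0 ≤ ω) (hωlam : ∀ p, ω ≤ lam p) :
    ∫ x, Real.exp (-ω * W x) ∂μ
      = (1 / β ω) * ∫ x, ∏ p, (1 - ω / lam p) ^ (D x p) ∂μ :=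
  stmt5_general μ n lam hlam ν hνsupp T D hT hD hTlaw hjoint W B hW hB hB0 hWB hWBindep β hβ ω hω0
    hωlam
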